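/- Quasi-optimality of the smoothed method (abstract form of Proposition 4.6): assume ã(s, σ − Eσ) = st(s, σ) for all s, σ ∈ S (eq. (26), equivalently c(s, Eσ) = c(s, σ) for all s, σ ∈ S), and let C_H ≥ 0 be a constant such that c(σ − Eσ, σ − Eσ) ≤ C_H²·ã(σ, σ) for all σ ∈ S (eq. (28)). If u ∈ V and U ∈ S satisfy ã(U, σ) = ã(u, Eσ) for all σ ∈ S, then ã(u − U, u − U) ≤ (1 + C_H²)·inf_{s ∈ S} ã(u − s, u − s). -/

import Mathlib

/-- Cauchy-Schwarz for a symmetric positive semidefinite bilinear form. -/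
theorem cs_aux {W : Type*} [AddCommGroup W] [Module ℝ W] (b : W →ₗ[ℝ] W →ₗ[ℝ] ℝ)
    (hsymm : ∀ x y, b x y = b y x) (hpsd : ∀ x, 0 ≤ b x x) (x y : W) :
    b x y ^ 2 ≤ b x x * b y y := by
  have h : ∀ t : ℝ, 0 ≤ b y y * (t * t) + (2 * b x y) * t + b x x := by
    intro t
    have hexp : b (x + t • y) (x + t • y) = b y y * (t * t) + (2 * b x y) * t + b x x := by
      simp only [map_add, map_smul, LinearMap.add_apply, LinearMap.smul_apply, smul_eq_mul]
      rw [hsymm y x]; ring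
    have h0 := hpsd (x + t • y)
    rw [hexp] at h0
    exact h0
  have h2 := discrim_le_zero h
  rw [discrim] at h2
  nlinarith [h2]

/-- Quasi-optimality of the smoothed method (abstract form of Proposition 4.6):
under eq. (26) and the bound (28) with constant `C_H ≥ 0`, if `ã(U, σ) = ã(u, Eσ)` for all
`σ ∈ S`, then `ã(u − U, u − U) ≤ (1 + C_H²) * inf_{s ∈ S} ã(u − s, u − s)`. -/
theorem stmt_9 {W : Type*} [AddCommGroup W] [Module ℝ W]
    (V S : Submodule ℝ W) [FiniteDimensional ℝ S]
    (c st : W →ₗ[ℝ] W →ₗ[ℝ] ℝ)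
    (hcsymm : ∀ x y : W, c x y = c y x) (hcpsd : ∀ x : W, 0 ≤ c x x)
    (hstsymm : ∀ x y : W, st x y = st y x) (hstpsd : ∀ x : W, 0 ≤ st x x)
    (hstV : ∀ x y : W, x ∈ V ∨ y ∈ V → st x y = 0)
    (hpd : ∀ s : S, s ≠ 0 → 0 < c (s : W) (s : W) + st (s : W) (s : W))
    (E : S →ₗ[ℝ] V)
    (h26 : ∀ s σ : S,
      c (s : W) ((σ : W) - ((E σ : V) : W)) + st (s : W) ((σ : W) - ((E σ : V) : W)) =
        st (s : W) (σ : W))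
    (CH : ℝ) (hCH : 0 ≤ CH)
    (h28 : ∀ σ : S,
      c ((σ : W) - ((E σ : V) : W)) ((σ : W) - ((E σ : V) : W)) ≤
        CH ^ 2 * (c (σ : W) (σ : W) + st (σ : W) (σ : W)))
    (u : W) (hu : u ∈ V)
    (U : S) (hU : ∀ σ : S,
      c (U : W) (σ : W) + st (U : W) (σ : W) =
        c u ((E σ : V) : W) + st u ((E σ : V) : W)) :
    c (u - (U : W)) (u - (U : W)) + st (u - (U : W)) (u - (U : W)) ≤
      (1 + CH ^ 2) * sInf {r : ℝ | ∃ s : S,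
        r = c (u - (s : W)) (u - (s : W)) + st (u - (s : W)) (u - (s : W))} := by
  -- pointwise bilinearity lemmas
  have c1 : ∀ x y z : W, c (x - y) z = c x z - c y z := by
    intro x y z; rw [map_sub]; rfl
  have c2 : ∀ x y z : W, c x (y - z) = c x y - c x z := by
    intro x y z; rw [map_sub]
  have c3 : ∀ x y z : W, c (x + y) z = c x z + c y z := by
    intro x y z; rw [map_add]; rfl
  have s1 : ∀ x y z : W, st (x - y) z = st x z - st y z := by
    intro x y z; rw [map_sub]; rfl
  have s2 : ∀ x y z : W, st x (y - z) = st x y - st x z := by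
    intro x y z; rw [map_sub]
  have s3 : ∀ x y z : W, st (x + y) z = st x z + st y z := by
    intro x y z; rw [map_add]; rfl
  -- st vanishes when u or E σ is an argument
  have hstu : ∀ y : W, st u y = 0 := fun y => hstV u y (Or.inl hu)
  have hstEσ : ∀ (x : W) (σ : S), st x ((E σ : V) : W) = 0 :=
    fun x σ => hstV x _ (Or.inr (E σ).2)
  -- the a-orthogonal projection of u onto S exists
  obtain ⟨p, hproj⟩ : ∃ p : S, ∀ σ : S,
      c (p : W) (σ : W) + st (p : W) (σ : W) = c u (σ : W) + st u (σ : W) := by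
    set B : LinearMap.BilinForm ℝ S := (c + st).compl₁₂ S.subtype S.subtype with hB
    have hBapp : ∀ s σ : S, B s σ = c (s : W) (σ : W) + st (s : W) (σ : W) := by
      intro s σ
      simp [hB, LinearMap.compl₁₂_apply]
    have hnd : B.Nondegenerate := by
      refine ⟨fun s hs => ?_, fun s hs => ?_⟩
      by_contra hne
      have h1 := hpd s hne
      have h0 := hs s
      rw [hBapp] at h0
      linarith
      by_contra hne
      have h1 := hpd s hne
      have h0 := hs s
      rw [hBapp] at h0
      linarith
    set φ : Module.Dual ℝ S := (c u + st u) ∘ₗ S.subtype with hφ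
    have hφapp : ∀ σ : S, φ σ = c u (σ : W) + st u (σ : W) := by
      intro σ; simp [hφ]
    refine ⟨(B.toDual hnd).symm φ, fun σ => ?_⟩
    have h0 := LinearMap.BilinForm.apply_toDual_symm_apply (B := B) (hB := hnd) (f := φ) (v := σ)
    rw [hBapp, hφapp] at h0
    exact h0
  -- d = u - p is a-orthogonal to S
  set d : W := u - (p : W) with hd
  have hdorth : ∀ σ : S, c d (σ : W) + st d (σ : W) = 0 := by
    intro σ
    rw [hd, c1, s1]
    have := hproj σ
    linarith
  set e : W := u - (U : W) with he
  -- key identity: a(e, σ) = c(d, σ - Eσ) for σ ∈ S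
  have hkey : ∀ σ : S, c e (σ : W) + st e (σ : W) = c d ((σ : W) - ((E σ : V) : W)) := by
    intro σ
    have hUσ := hU σ
    have h26' := h26 p σ
    have hstp : st (p : W) ((σ : W) - ((E σ : V) : W)) = st (p : W) (σ : W) := by
      rw [s2, hstEσ ((p : W)) σ]; ring
    have hcp : c (p : W) ((σ : W) - ((E σ : V) : W)) = 0 := by
      rw [hstp] at h26'; linarith
    rw [he, c1, s1, hd, c1, c2, c2]
    rw [c2] at hcp
    have h1 := hstu ((σ : W))
    have h2 := hstu ((E σ : V) : W)
    linarith
  -- σ₀ := p - U, so e = d + σ₀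
  have hedecomp : e = d + ((p : W) - (U : W)) := by
    rw [he, hd]; abel
  set w : W := (p : W) - (U : W) with hw
  have hwS : ((p - U : S) : W) = w := by
    rw [hw]; push_cast; ring_nf
  set D : ℝ := c d d + st d d with hD
  set T : ℝ := c w w + st w w with hT
  have hDnn : 0 ≤ D := add_nonneg (hcpsd d) (hstpsd d)
  have hTnn : 0 ≤ T := add_nonneg (hcpsd w) (hstpsd w)
  have hdw : c d w + st d w = 0 := by
    have := hdorth (p - U)
    rwa [hwS] at this
  -- Pythagoras: a(e,e) = D + T
  have hpyth : c e e + st e e = D + T := by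
    rw [hedecomp, c3, s3]
    have e1 : c d (d + w) = c d d + c d w := by rw [map_add]
    have e2 : c w (d + w) = c w d + c w w := by rw [map_add]
    have e3 : st d (d + w) = st d d + st d w := by rw [map_add]
    have e4 : st w (d + w) = st w d + st w w := by rw [map_add]
    rw [e1, e2, e3, e4, hcsymm w d, hstsymm w d, hD, hT]
    linarith [hdw]
  -- T = c(d, w - E(p-U))
  have hkey' := hkey (p - U)
  rw [hwS] at hkey'
  have hew : c e w + st e w = T := by
    rw [hedecomp, c3, s3, hT]
    linarith [hdw]
  have hT1 : T = c d (w - ((E (p - U) : V) : W)) := by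
    rw [← hew, hkey']
  -- bound: T <= CH^2 * D
  have hcd : c d d ≤ D := by
    rw [hD]; linarith [hstpsd d]
  have h28' : c (w - ((E (p - U) : V) : W)) (w - ((E (p - U) : V) : W)) ≤ CH ^ 2 * T := by
    have h0 := h28 (p - U)
    rw [hwS] at h0
    rw [hT]
    exact h0
  have hTle : T ≤ CH ^ 2 * D := by
    have hcs := cs_aux c hcsymm hcpsd d (w - ((E (p - U) : V) : W))
    have hT2 : T ^ 2 ≤ D * (CH ^ 2 * T) := by
      calc T ^ 2 = c d (w - ((E (p - U) : V) : W)) ^ 2 := by rw [hT1]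
        _ ≤ c d d * c (w - ((E (p - U) : V) : W)) (w - ((E (p - U) : V) : W)) := hcs
        _ ≤ D * (CH ^ 2 * T) := mul_le_mul hcd h28' (hcpsd _) hDnn
    rcases eq_or_lt_of_le hTnn with h0 | h0
    · rw [← h0]
      exact mul_nonneg (sq_nonneg CH) hDnn
    · have h1 : T * T ≤ (CH ^ 2 * D) * T := by nlinarith [hT2]
      exact le_of_mul_le_mul_right h1 h0
  -- D is a lower bound for the set
  have hmin : ∀ s : S, D ≤ c (u - (s : W)) (u - (s : W)) + st (u - (s : W)) (u - (s : W)) := by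
    intro s
    have hdec : u - (s : W) = d + ((p : W) - (s : W)) := by
      rw [hd]; abel
    set w2 : W := (p : W) - (s : W) with hw2
    have hw2S : ((p - s : S) : W) = w2 := by
      rw [hw2]; push_cast; ring_nf
    have hdw2 : c d w2 + st d w2 = 0 := by
      have := hdorth (p - s)
      rwa [hw2S] at this
    rw [hdec, c3, s3]
    have e1 : c d (d + w2) = c d d + c d w2 := by rw [map_add]
    have e2 : c w2 (d + w2) = c w2 d + c w2 w2 := by rw [map_add]
    have e3 : st d (d + w2) = st d d + st d w2 := by rw [map_add]
    have e4 : st w2 (d + w2) = st w2 d + st w2 w2 := by rw [map_add]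
    rw [e1, e2, e3, e4, hcsymm w2 d, hstsymm w2 d, hD]
    have h5 : 0 ≤ c w2 w2 + st w2 w2 := add_nonneg (hcpsd w2) (hstpsd w2)
    linarith [hdw2]
  -- conclude
  set Q : Set ℝ := {r : ℝ | ∃ s : S,
      r = c (u - (s : W)) (u - (s : W)) + st (u - (s : W)) (u - (s : W))} with hQ
  have hQne : Q.Nonempty := ⟨_, ⟨0, rfl⟩⟩
  have hlb : ∀ r ∈ Q, D ≤ r := by
    rintro r ⟨s, rfl⟩
    exact hmin s
  have hDQ : D ≤ sInf Q := le_csInf hQne hlb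
  show c e e + st e e ≤ (1 + CH ^ 2) * sInf Q
  rw [hpyth]
  have hfac : 0 ≤ 1 + CH ^ 2 := by positivity
  calc D + T ≤ D + CH ^ 2 * D := by linarith
    _ = (1 + CH ^ 2) * D := by ring
    _ ≤ (1 + CH ^ 2) * sInf Q := mul_le_mul_of_nonneg_left hDQ hfac
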